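/- For symmetric probability measures x₁, x₂ on ℝ̄: H(x₁ ⊛ x₂) + H(x₁ ⊞ x₂) = H(x₁) + H(x₂) (duality rule for entropy). -/

import Mathlib

open MeasureTheory Real Set Filter
open scoped ENNReal NNReal

noncomputable section

/-- Exponential on the extended reals, valued in `ℝ≥0∞` (with `e^{-∞}=0`, `e^{∞}=∞`). -/
def eexp (a : EReal) : ℝ≥0∞ :=
  if a = ⊤ then ⊤ else if a = ⊥ then 0 else ENNReal.ofReal (Real.exp a.toReal)

/-- A finite Borel measure `x` on the extended reals is *symmetric* if
`x(-E) = ∫_E e^{-α} x(dα)` for every Borel set `E`. -/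
def SymmetricM (x : Measure EReal) : Prop :=
  ∀ E : Set EReal, MeasurableSet E →
    x ((fun a : EReal => -a) ⁻¹' E) = ∫⁻ a in E, eexp (-a) ∂x

/-- `tanh(α/2)` extended continuously to the extended reals. -/
def etanh (a : EReal) : ℝ :=
  if a = ⊤ then 1 else if a = ⊥ then -1 else Real.tanh (a.toReal / 2)

/-- The moment functional `M_k(x) = ∫ tanh^{2k}(α/2) x(dα)`. -/
def Mk (k : ℕ) (x : Measure EReal) : ℝ := ∫ a, (etanh a) ^ (2 * k) ∂x

/-- The entropy integrand `log₂(1+e^{-α})`, with the convention that it vanishes at `±∞`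
(symmetric measures put no mass at `-∞`). -/
def entFn (a : EReal) : ℝ :=
  if a = ⊤ then 0 else if a = ⊥ then 0 else Real.logb 2 (1 + Real.exp (-a.toReal))

/-- The entropy functional `H(x) = ∫ log₂(1+e^{-α}) x(dα)`. -/
def Hent (x : Measure EReal) : ℝ := ∫ a, entFn a ∂x

/-- Variable-node convolution `⊛`: pushforward of the product measure under addition. -/
def vconv (x y : Measure EReal) : Measure EReal :=
  Measure.map (fun p : EReal × EReal => p.1 + p.2) (x.prod y)

/-- Inverse hyperbolic tangent on `ℝ`. -/
def _root_.artanh (t : ℝ) : ℝ := Real.log ((1 + t) / (1 - t)) / 2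

/-- The check-node combination map `(α₁,α₂) ↦ 2 tanh⁻¹(tanh(α₁/2) tanh(α₂/2))` on `ℝ̄ × ℝ̄`. -/
def boxFn (p : EReal × EReal) : EReal :=
  if etanh p.1 * etanh p.2 = 1 then ⊤
  else if etanh p.1 * etanh p.2 = -1 then ⊥
  else ((2 * _root_.artanh (etanh p.1 * etanh p.2) : ℝ) : EReal)

/-- Check-node convolution `⊞`: pushforward of the product measure under `boxFn`. -/
def cconv (x y : Measure EReal) : Measure EReal :=
  Measure.map boxFn (x.prod y)

/-- Degradation order: `Degraded x' x` means `x' ⪰ x`, i.e.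
`∫ f(|tanh(α/2)|) dx' ≥ ∫ f(|tanh(α/2)|) dx` for all concave non-increasing `f : [0,1] → ℝ`. -/
def Degraded (x' x : Measure EReal) : Prop :=
  ∀ f : ℝ → ℝ, ConcaveOn ℝ (Set.Icc (0:ℝ) 1) f → AntitoneOn f (Set.Icc (0:ℝ) 1) →
    ∫ a, f |etanh a| ∂x ≤ ∫ a, f |etanh a| ∂x'

/-- The coefficients `γ_k = 1/((log 2)·2k·(2k−1))`. -/
def gam (k : ℕ) : ℝ := 1 / (Real.log 2 * (2 * (k : ℝ)) * (2 * (k : ℝ) - 1))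

/-- The entropy distance `d_H(x₁,x₂) = Σ_{k≥1} γ_k |M_k(x₁) − M_k(x₂)|`. -/
def dH (x y : Measure EReal) : ℝ := ∑' k : ℕ, gam (k + 1) * |Mk (k + 1) x - Mk (k + 1) y|

/-- The Bhattacharyya integrand `e^{-α/2}` (vanishing at `±∞`, as symmetric measures put
no mass at `-∞`). -/
def bFn (a : EReal) : ℝ :=
  if a = ⊤ then 0 else if a = ⊥ then 0 else Real.exp (-(a.toReal) / 2)

/-- The Bhattacharyya functional `B(x) = ∫ e^{-α/2} x(dα)`. -/
def Bhat (x : Measure EReal) : ℝ := ∫ a, bFn a ∂x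

/-- `n`-fold variable-node convolution power `x^{⊛n}` (with `x^{⊛0} = Δ_0`). -/
def vpow (x : Measure EReal) : ℕ → Measure EReal
  | 0 => Measure.dirac 0
  | n + 1 => vconv (vpow x n) x


namespace Stmt6Aux

lemma tanh_lt_one' (x : ℝ) : Real.tanh x < 1 := by
  rw [Real.tanh_eq_sinh_div_cosh, div_lt_one (Real.cosh_pos x)]
  nlinarith [Real.cosh_sub_sinh x, Real.exp_pos (-x)]

lemma neg_one_lt_tanh' (x : ℝ) : -1 < Real.tanh x := by
  rw [Real.tanh_eq_sinh_div_cosh, lt_div_iff₀ (Real.cosh_pos x)]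
  nlinarith [Real.cosh_add_sinh x, Real.exp_pos x]

lemma tanh_half (a : ℝ) : Real.tanh (a/2) = (1 - Real.exp (-a)) / (1 + Real.exp (-a)) := by
  have h1 : Real.exp (-a) = Real.exp (-(a/2)) * Real.exp (-(a/2)) := by
    rw [← Real.exp_add]; ring_nf
  have h2 : Real.exp (a/2) * Real.exp (-(a/2)) = 1 := by
    rw [← Real.exp_add]; simp
  have hp : (0:ℝ) < 1 + Real.exp (-a) := by positivity
  rw [Real.tanh_eq_sinh_div_cosh, Real.sinh_eq, Real.cosh_eq]
  have hc : Real.exp (a/2) + Real.exp (-(a/2)) ≠ 0 := by positivity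
  have he : Real.exp (-a/2) = Real.exp (-(a/2)) := by ring_nf
  field_simp
  rw [h1]
  linear_combination (2 * Real.exp (-(a/2))) * h2

lemma artanh_tanh (x : ℝ) : _root_.artanh (Real.tanh x) = x := by
  have hc := Real.cosh_pos x
  have h1 : 1 + Real.tanh x = Real.exp x / Real.cosh x := by
    rw [Real.tanh_eq_sinh_div_cosh, ← Real.cosh_add_sinh]
    field_simp
  have h2 : 1 - Real.tanh x = Real.exp (-x) / Real.cosh x := by
    rw [Real.tanh_eq_sinh_div_cosh, ← Real.cosh_sub_sinh]
    field_simp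
  have h3 : (Real.exp x / Real.cosh x) / (Real.exp (-x) / Real.cosh x)
      = Real.exp x / Real.exp (-x) := by
    field_simp
  rw [_root_.artanh, h1, h2, h3, ← Real.exp_sub]
  rw [Real.log_exp]; ring

lemma exp_neg_two_artanh {u : ℝ} (h1 : -1 < u) (h2 : u < 1) :
    Real.exp (-(2 * _root_.artanh u)) = (1 - u) / (1 + u) := by
  have hp : (0:ℝ) < 1 + u := by linarith
  have hm : (0:ℝ) < 1 - u := by linarith
  rw [_root_.artanh]
  have : -(2 * (Real.log ((1 + u) / (1 - u)) / 2)) = Real.log (((1 + u) / (1 - u))⁻¹) := by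
    rw [Real.log_inv]; ring
  rw [this, Real.exp_log (by positivity), inv_div]

lemma key_real (a b : ℝ) :
    Real.logb 2 (1 + Real.exp (-(a+b)))
      + Real.logb 2 (1 + Real.exp (-(2 * _root_.artanh (Real.tanh (a/2) * Real.tanh (b/2)))))
    = Real.logb 2 (1 + Real.exp (-a)) + Real.logb 2 (1 + Real.exp (-b)) := by
  set p := Real.exp (-a) with hp
  set q := Real.exp (-b) with hq
  have hp0 : 0 < p := Real.exp_pos _
  have hq0 : 0 < q := Real.exp_pos _
  set u := Real.tanh (a/2) * Real.tanh (b/2) with hu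
  have hu1 : -1 < u := by
    nlinarith [tanh_lt_one' (a/2), tanh_lt_one' (b/2), neg_one_lt_tanh' (a/2),
      neg_one_lt_tanh' (b/2)]
  have hu2 : u < 1 := by
    nlinarith [tanh_lt_one' (a/2), tanh_lt_one' (b/2), neg_one_lt_tanh' (a/2),
      neg_one_lt_tanh' (b/2)]
  have hab : Real.exp (-(a+b)) = p * q := by rw [hp, hq, ← Real.exp_add]; ring_nf
  have he : Real.exp (-(2 * _root_.artanh u)) = (1 - u) / (1 + u) := exp_neg_two_artanh hu1 hu2
  have hup : (0:ℝ) < 1 + u := by linarith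
  have huval : u = (1 - p) / (1 + p) * ((1 - q) / (1 + q)) := by
    rw [hu, tanh_half, tanh_half]
  have h2u : 1 + (1 - u)/(1 + u) = 2 / (1 + u) := by field_simp; ring
  have hkey : (1 + p * q) * (2 / (1 + u)) = (1 + p) * (1 + q) := by
    rw [huval]
    have : (1:ℝ) + (1 - p) / (1 + p) * ((1 - q) / (1 + q))
        = 2 * (1 + p * q) / ((1 + p) * (1 + q)) := by
      field_simp; ring
    rw [this]
    field_simp
  rw [hab, he, h2u, ← Real.logb_mul (by positivity) (by positivity), hkey,
    Real.logb_mul (by positivity) (by positivity)]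

@[simp] lemma etanh_coe (x : ℝ) : etanh (x : EReal) = Real.tanh (x/2) := by
  simp [etanh, EReal.toReal_coe]

@[simp] lemma etanh_top : etanh ⊤ = 1 := by simp [etanh]

@[simp] lemma entFn_coe (x : ℝ) : entFn (x : EReal) = Real.logb 2 (1 + Real.exp (-x)) := by
  simp [entFn, EReal.toReal_coe]

@[simp] lemma entFn_top : entFn ⊤ = 0 := by simp [entFn]

@[simp] lemma entFn_bot : entFn ⊥ = 0 := by simp [entFn]

lemma entFn_nonneg (a : EReal) : 0 ≤ entFn a := by
  induction a using EReal.rec with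
  | bot => simp
  | top => simp
  | coe x =>
      rw [entFn_coe]
      exact Real.logb_nonneg one_lt_two (by nlinarith [Real.exp_pos (-x)])
lemma measurable_etanh : Measurable etanh := by
  apply EReal.measurable_of_measurable_real
  have : (fun p : ℝ => etanh (p : EReal)) = fun p : ℝ => Real.tanh (p/2) := by
    funext p; simp
  rw [this]
  have : Continuous fun p : ℝ => Real.tanh (p/2) := by
    simp only [Real.tanh_eq_sinh_div_cosh]
    exact (Real.continuous_sinh.comp (continuous_id.div_const 2)).div
      (Real.continuous_cosh.comp (continuous_id.div_const 2)) fun x => (Real.cosh_pos _).ne'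
  exact this.measurable

lemma measurable_entF : Measurable (fun a => ENNReal.ofReal (entFn a)) := by
  apply ENNReal.measurable_ofReal.comp
  apply EReal.measurable_of_measurable_real
  have : (fun p : ℝ => entFn (p : EReal)) = fun p : ℝ => Real.logb 2 (1 + Real.exp (-p)) := by
    funext p; simp
  rw [this]
  simp only [Real.logb]
  exact (Real.measurable_log.comp
    ((measurable_const.add (Real.measurable_exp.comp measurable_neg)))).div_const _

lemma measurable_neg_er : Measurable (fun a : EReal => -a) := by
  apply EReal.measurable_of_measurable_real
  have : (fun p : ℝ => -(p : EReal)) = fun p : ℝ => ((-p : ℝ) : EReal) := by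
    funext p; exact (EReal.coe_neg p).symm
  rw [this]
  exact measurable_neg.coe_real_ereal

lemma measurable_eexp : Measurable eexp := by
  apply EReal.measurable_of_measurable_real
  have : (fun p : ℝ => eexp (p : EReal)) = fun p : ℝ => ENNReal.ofReal (Real.exp p) := by
    funext p; simp [eexp, EReal.toReal_coe]
  rw [this]
  exact ENNReal.measurable_ofReal.comp Real.measurable_exp

lemma measurable_add_er : Measurable (fun p : EReal × EReal => p.1 + p.2) := by
  have heq : (fun p : EReal × EReal => p.1 + p.2) = fun p =>
      if p.1 = ⊥ ∨ p.2 = ⊥ then (⊥ : EReal)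
      else if p.1 = ⊤ ∨ p.2 = ⊤ then ⊤
      else ((p.1.toReal + p.2.toReal : ℝ) : EReal) := by
    funext p
    rcases p with ⟨a, b⟩
    induction a using EReal.rec <;> induction b using EReal.rec <;>
      simp [EReal.bot_add, EReal.add_bot, EReal.top_add_of_ne_bot, EReal.add_top_of_ne_bot,
        ← EReal.coe_add]
  rw [heq]
  have hb : MeasurableSet {p : EReal × EReal | p.1 = ⊥ ∨ p.2 = ⊥} := by
    have : {p : EReal × EReal | p.1 = ⊥ ∨ p.2 = ⊥}
        = (Prod.fst ⁻¹' {⊥}) ∪ (Prod.snd ⁻¹' {⊥}) := by ext p; simp [Set.mem_union]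
    rw [this]
    exact (measurable_fst (measurableSet_singleton _)).union
      (measurable_snd (measurableSet_singleton _))
  have ht : MeasurableSet {p : EReal × EReal | p.1 = ⊤ ∨ p.2 = ⊤} := by
    have : {p : EReal × EReal | p.1 = ⊤ ∨ p.2 = ⊤}
        = (Prod.fst ⁻¹' {⊤}) ∪ (Prod.snd ⁻¹' {⊤}) := by ext p; simp [Set.mem_union]
    rw [this]
    exact (measurable_fst (measurableSet_singleton _)).union
      (measurable_snd (measurableSet_singleton _))
  exact Measurable.ite hb measurable_const
    (Measurable.ite ht measurable_const
      ((measurable_fst.ereal_toReal.add measurable_snd.ereal_toReal).coe_real_ereal))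

lemma measurable_artanh : Measurable _root_.artanh := by
  have : _root_.artanh = fun t => Real.log ((1 + t) / (1 - t)) / 2 := rfl
  rw [this]
  exact (Real.measurable_log.comp
    ((measurable_const.add measurable_id).div (measurable_const.sub measurable_id))).div_const _

lemma measurable_boxFn : Measurable boxFn := by
  have hg : Measurable fun p : EReal × EReal => etanh p.1 * etanh p.2 :=
    (measurable_etanh.comp measurable_fst).mul (measurable_etanh.comp measurable_snd)
  have h1 : MeasurableSet {p : EReal × EReal | etanh p.1 * etanh p.2 = 1} :=
    hg (measurableSet_singleton 1)
  have h2 : MeasurableSet {p : EReal × EReal | etanh p.1 * etanh p.2 = -1} :=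
    hg (measurableSet_singleton (-1))
  exact Measurable.ite h1 measurable_const
    (Measurable.ite h2 measurable_const
      (((measurable_artanh.comp hg).const_mul 2).coe_real_ereal))

lemma boxFn_top_coe (y : ℝ) : boxFn (⊤, (y : EReal)) = (y : EReal) := by
  have h1 := tanh_lt_one' (y/2)
  have h2 := neg_one_lt_tanh' (y/2)
  have : (2 : ℝ) * _root_.artanh (Real.tanh (y/2)) = y := by rw [artanh_tanh]; ring
  simp only [boxFn, etanh_top, etanh_coe, one_mul]
  rw [if_neg (by linarith), if_neg (by linarith), this]

lemma boxFn_coe_top (y : ℝ) : boxFn ((y : EReal), ⊤) = (y : EReal) := by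
  have h1 := tanh_lt_one' (y/2)
  have h2 := neg_one_lt_tanh' (y/2)
  have : (2 : ℝ) * _root_.artanh (Real.tanh (y/2)) = y := by rw [artanh_tanh]; ring
  simp only [boxFn, etanh_top, etanh_coe, mul_one]
  rw [if_neg (by linarith), if_neg (by linarith), this]

lemma ptwise {a b : EReal} (ha : a ≠ ⊥) (hb : b ≠ ⊥) :
    entFn (a + b) + entFn (boxFn (a, b)) = entFn a + entFn b := by
  induction a using EReal.rec with
  | bot => exact absurd rfl ha
  | top =>
      induction b using EReal.rec with
      | bot => exact absurd rfl hb
      | top =>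
          have : boxFn (⊤, ⊤) = ⊤ := by simp [boxFn]
          simp [this]
      | coe y =>
          rw [EReal.top_add_of_ne_bot (EReal.coe_ne_bot y), boxFn_top_coe]
  | coe x =>
      induction b using EReal.rec with
      | bot => exact absurd rfl hb
      | top =>
          rw [EReal.add_top_of_ne_bot (EReal.coe_ne_bot x), boxFn_coe_top]
          simp
      | coe y =>
          have h1 := tanh_lt_one' (x/2)
          have h2 := neg_one_lt_tanh' (x/2)
          have h3 := tanh_lt_one' (y/2)
          have h4 := neg_one_lt_tanh' (y/2)
          have hu1 : Real.tanh (x/2) * Real.tanh (y/2) < 1 := by nlinarith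
          have hu2 : -1 < Real.tanh (x/2) * Real.tanh (y/2) := by nlinarith
          have hbox : boxFn ((x : EReal), (y : EReal))
              = ((2 * _root_.artanh (Real.tanh (x/2) * Real.tanh (y/2)) : ℝ) : EReal) := by
            simp only [boxFn, etanh_coe]
            rw [if_neg (by linarith), if_neg (by linarith)]
          rw [hbox, ← EReal.coe_add, entFn_coe, entFn_coe, entFn_coe, entFn_coe]
          exact key_real x y

@[simp] lemma eexp_bot : eexp ⊥ = 0 := by simp [eexp]

lemma bot_null {x : Measure EReal} (h : SymmetricM x) : x {⊥} = 0 := by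
  have hpre : (fun a : EReal => -a) ⁻¹' {⊤} = {⊥} := by
    ext a; simp [EReal.neg_eq_top_iff]
  have h0 := h {⊤} (measurableSet_singleton _)
  rw [hpre] at h0
  rw [h0]
  have : ∀ᵐ a ∂x, a ∈ ({⊤} : Set EReal) → eexp (-a) = 0 := by
    refine Filter.Eventually.of_forall ?_
    intro a ha
    simp only [Set.mem_singleton_iff] at ha
    subst ha
    rw [EReal.neg_top, eexp_bot]
  rw [setLIntegral_congr_fun_ae (measurableSet_singleton _) this]
  simp

lemma sym_map {x : Measure EReal} (h : SymmetricM x) :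
    Measure.map (fun a : EReal => -a) x = x.withDensity (fun a => eexp (-a)) := by
  ext E hE
  rw [Measure.map_apply measurable_neg_er hE, withDensity_apply _ hE]
  exact h E hE

lemma sym_lintegral {x : Measure EReal} (h : SymmetricM x) {g : EReal → ℝ≥0∞}
    (hg : Measurable g) :
    ∫⁻ a, g (-a) ∂x = ∫⁻ a, eexp (-a) * g a ∂x := by
  have h1 : ∫⁻ a, g (-a) ∂x = ∫⁻ a, g a ∂(Measure.map (fun a : EReal => -a) x) :=
    (lintegral_map hg measurable_neg_er).symm
  have hd : Measurable fun a : EReal => eexp (-a) := measurable_eexp.comp measurable_neg_er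
  rw [h1, sym_map h, lintegral_withDensity_eq_lintegral_mul _ hd hg]
  rfl

lemma bnd_real {x : ℝ} (hx : 0 < x) :
    Real.exp (-x) * Real.logb 2 (1 + Real.exp x) ≤ 2 := by
  have hlog2 : (0.6931471803 : ℝ) < Real.log 2 := Real.log_two_gt_d9
  have hex1 : (1:ℝ) ≤ Real.exp x := Real.one_le_exp hx.le
  have he2 : (2:ℝ) < Real.exp 1 := by
    have := Real.exp_one_gt_d9; linarith
  have h1 : Real.log (1 + Real.exp x) ≤ 1 + x := by
    have hle : (1:ℝ) + Real.exp x ≤ Real.exp (1 + x) := by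
      rw [Real.exp_add]; nlinarith
    calc Real.log (1 + Real.exp x) ≤ Real.log (Real.exp (1 + x)) :=
          Real.log_le_log (by positivity) hle
      _ = 1 + x := Real.log_exp _
  have hprod : Real.exp (-x) * Real.exp x = 1 := by rw [← Real.exp_add]; simp
  have h2 : Real.exp (-x) * (1 + x) ≤ 1 := by
    nlinarith [Real.add_one_le_exp x, Real.exp_pos (-x)]
  have h3 : Real.exp (-x) * Real.log (1 + Real.exp x) ≤ 1 := by
    nlinarith [Real.exp_pos (-x), Real.log_nonneg (by nlinarith : (1:ℝ) ≤ 1 + Real.exp x)]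
  rw [Real.logb]
  rw [mul_div_assoc']
  rw [div_le_iff₀ (by linarith : (0:ℝ) < Real.log 2)]
  nlinarith [Real.exp_pos (-x), Real.log_nonneg (by nlinarith : (1:ℝ) ≤ 1 + Real.exp x)]

lemma lint_fin (x : Measure EReal) [IsProbabilityMeasure x] (h : SymmetricM x) :
    ∫⁻ a, ENNReal.ofReal (entFn a) ∂x ≠ ⊤ := by
  set F : EReal → ℝ≥0∞ := fun a => ENNReal.ofReal (entFn a) with hF
  have hFm : Measurable F := measurable_entF
  have hIci : MeasurableSet (Set.Ici (0 : EReal)) := measurableSet_Ici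
  have hsplit : ∫⁻ a in Set.Ici (0:EReal), F a ∂x + ∫⁻ a in (Set.Ici (0:EReal))ᶜ, F a ∂x
      = ∫⁻ a, F a ∂x := lintegral_add_compl F hIci
  -- part 1
  have h1 : ∫⁻ a in Set.Ici (0:EReal), F a ∂x ≤ 1 := by
    have hmono : ∫⁻ a in Set.Ici (0:EReal), F a ∂x ≤ ∫⁻ _ in Set.Ici (0:EReal), 1 ∂x := by
      refine setLIntegral_mono measurable_const ?_
      intro a ha
      induction a using EReal.rec with
      | bot => simp [hF]
      | top => simp [hF]
      | coe r =>
          have hr : (0:ℝ) ≤ r := EReal.coe_nonneg.mp ha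
          have hexp : Real.exp (-r) ≤ 1 := Real.exp_le_one_iff.mpr (by linarith)
          have : Real.logb 2 (1 + Real.exp (-r)) ≤ 1 := by
            have := Real.logb_le_logb_of_le (b := 2) one_lt_two
              (by positivity : (0:ℝ) < 1 + Real.exp (-r))
              (by nlinarith [Real.exp_pos (-r)] : (1:ℝ) + Real.exp (-r) ≤ 2)
            rwa [Real.logb_self_eq_one one_lt_two] at this
          simp only [hF, entFn_coe]
          exact ENNReal.ofReal_le_one.mpr this
    refine hmono.trans ?_
    rw [setLIntegral_one]
    exact prob_le_one
  -- part 2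
  set g : EReal → ℝ≥0∞ := fun b => if 0 < b then F (-b) else 0 with hg
  have hgm : Measurable g := by
    exact Measurable.ite measurableSet_Ioi (hFm.comp measurable_neg_er) measurable_const
  have hneg : ∀ a : EReal, g (-a) = if a < 0 then F a else 0 := by
    intro a
    by_cases ha : a < 0
    · have h0 : (0:EReal) < -a := by
        rw [← neg_zero]; exact EReal.neg_lt_neg_iff.mpr ha
      rw [hg]
      simp only [h0, if_pos, ha, if_pos]
      rw [neg_neg]
    · have h0 : ¬ (0:EReal) < -a := by
        intro hc
        apply ha
        have := EReal.neg_lt_neg_iff.mpr hc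
        rwa [neg_neg, neg_zero] at this
      simp [hg, h0, ha]
  have hcompl : (Set.Ici (0:EReal))ᶜ = Set.Iio 0 := by
    ext a; simp
  have h2a : ∫⁻ a in (Set.Ici (0:EReal))ᶜ, F a ∂x = ∫⁻ a, g (-a) ∂x := by
    rw [hcompl, ← lintegral_indicator measurableSet_Iio]
    refine lintegral_congr fun a => ?_
    rw [hneg a]
    by_cases ha : a < 0
    · simp [Set.indicator, ha]
    · simp [Set.indicator, ha]
  have h2b : ∫⁻ a, g (-a) ∂x = ∫⁻ a, eexp (-a) * g a ∂x := sym_lintegral h hgm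
  have hpt : ∀ a : EReal, eexp (-a) * g a ≤ ENNReal.ofReal 2 := by
    intro a
    by_cases ha : (0:EReal) < a
    · induction a using EReal.rec with
      | bot => simp [hg, eexp]
      | top =>
          have : g ⊤ = F ⊥ := by simp [hg, EReal.neg_top]
          rw [this]
          simp [hF]
      | coe r =>
          have hr : (0:ℝ) < r := by
            have := ha; rwa [← EReal.coe_zero, EReal.coe_lt_coe_iff] at this
          have hgr : g (r : EReal) = ENNReal.ofReal (Real.logb 2 (1 + Real.exp r)) := by
            have hcn : -((r:EReal)) = ((-r : ℝ) : EReal) := (EReal.coe_neg r).symm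
            simp only [hg, ha, if_pos, hF, hcn, entFn_coe, neg_neg]
          have hee : eexp (-(r : EReal)) = ENNReal.ofReal (Real.exp (-r)) := by
            rw [← EReal.coe_neg]
            simp [eexp, EReal.toReal_coe]
          rw [hgr, hee, ← ENNReal.ofReal_mul (Real.exp_pos _).le]
          exact ENNReal.ofReal_le_ofReal (bnd_real hr)
    · simp [hg, ha]
  have h2 : ∫⁻ a in (Set.Ici (0:EReal))ᶜ, F a ∂x ≤ ENNReal.ofReal 2 := by
    rw [h2a, h2b]
    calc ∫⁻ a, eexp (-a) * g a ∂x ≤ ∫⁻ _, ENNReal.ofReal 2 ∂x :=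
          lintegral_mono fun a => hpt a
      _ = ENNReal.ofReal 2 := by rw [lintegral_const, measure_univ, mul_one]
  rw [← hsplit]
  exact (lt_of_le_of_lt (add_le_add h1 h2) (by simp)).ne

lemma measurable_entFn : Measurable entFn := by
  apply EReal.measurable_of_measurable_real
  have : (fun p : ℝ => entFn (p : EReal)) = fun p : ℝ => Real.logb 2 (1 + Real.exp (-p)) := by
    funext p; simp
  rw [this]
  simp only [Real.logb]
  exact (Real.measurable_log.comp
    ((measurable_const.add (Real.measurable_exp.comp measurable_neg)))).div_const _

lemma Hent_eq (x : Measure EReal) :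
    Hent x = (∫⁻ a, ENNReal.ofReal (entFn a) ∂x).toReal := by
  rw [Hent, integral_eq_lintegral_of_nonneg_ae (Filter.Eventually.of_forall entFn_nonneg)
    measurable_entFn.aestronglyMeasurable]

end Stmt6Aux

open Stmt6Aux in
/-- Duality rule for entropy:
`H(x₁ ⊛ x₂) + H(x₁ ⊞ x₂) = H(x₁) + H(x₂)` for symmetric probability measures. -/
theorem stmt6 (x1 x2 : Measure EReal) [IsProbabilityMeasure x1] [IsProbabilityMeasure x2]
    (h1 : SymmetricM x1) (h2 : SymmetricM x2) :
    Hent (vconv x1 x2) + Hent (cconv x1 x2) = Hent x1 + Hent x2 := by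
  set F : EReal → ℝ≥0∞ := fun a => ENNReal.ofReal (entFn a) with hF
  set μ := x1.prod x2 with hμ
  have hFm : Measurable F := measurable_entF
  -- lintegral identities for the convolutions
  have hv : ∫⁻ a, F a ∂(vconv x1 x2) = ∫⁻ p, F (p.1 + p.2) ∂μ := by
    rw [vconv, lintegral_map hFm measurable_add_er]
  have hc : ∫⁻ a, F a ∂(cconv x1 x2) = ∫⁻ p, F (boxFn p) ∂μ := by
    rw [cconv, lintegral_map hFm measurable_boxFn]
  -- almost everywhere, both coordinates are ≠ ⊥
  have hae : ∀ᵐ p ∂μ, p.1 ≠ (⊥ : EReal) ∧ p.2 ≠ (⊥ : EReal) := by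
    rw [ae_iff]
    have hA : μ (({⊥} : Set EReal) ×ˢ (Set.univ : Set EReal)) = 0 := by
      rw [hμ, Measure.prod_prod, bot_null h1]; simp
    have hB : μ ((Set.univ : Set EReal) ×ˢ ({⊥} : Set EReal)) = 0 := by
      rw [hμ, Measure.prod_prod, bot_null h2]; simp
    refine measure_mono_null ?_ (measure_union_null hA hB)
    intro p hp
    simp only [Set.mem_setOf_eq, not_and_or, not_not] at hp
    rcases hp with hp | hp
    · exact Or.inl (by simp only [Set.mem_prod, Set.mem_singleton_iff, Set.mem_univ, and_true]; exact hp)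
    · exact Or.inr (by simp only [Set.mem_prod, Set.mem_singleton_iff, Set.mem_univ, true_and]; exact hp)
  -- pointwise duality under the integral
  have hcong : ∫⁻ p, (F (p.1 + p.2) + F (boxFn p)) ∂μ = ∫⁻ p, (F p.1 + F p.2) ∂μ := by
    refine lintegral_congr_ae (hae.mono fun p hp => ?_)
    rcases hp with ⟨hp1, hp2⟩
    have hkey := ptwise hp1 hp2
    show ENNReal.ofReal (entFn (p.1 + p.2)) + ENNReal.ofReal (entFn (boxFn p))
        = ENNReal.ofReal (entFn p.1) + ENNReal.ofReal (entFn p.2)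
    rw [← ENNReal.ofReal_add (entFn_nonneg _) (entFn_nonneg _),
      ← ENNReal.ofReal_add (entFn_nonneg _) (entFn_nonneg _)]
    exact congrArg ENNReal.ofReal (by simpa using hkey)
  -- split integrals over the product
  have hfst : ∫⁻ p, F p.1 ∂μ = ∫⁻ a, F a ∂x1 := by
    have hm : AEMeasurable (fun p : EReal × EReal => F p.1) (x1.prod x2) :=
      (hFm.comp measurable_fst).aemeasurable
    rw [hμ, lintegral_prod (fun p : EReal × EReal => F p.1) hm]
    simp [lintegral_const, measure_univ]
  have hsnd : ∫⁻ p, F p.2 ∂μ = ∫⁻ a, F a ∂x2 := by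
    have hm : AEMeasurable (fun p : EReal × EReal => F p.2) (x1.prod x2) :=
      (hFm.comp measurable_snd).aemeasurable
    rw [hμ, lintegral_prod (fun p : EReal × EReal => F p.2) hm]
    simp [lintegral_const, measure_univ]
  have hmain : ∫⁻ a, F a ∂(vconv x1 x2) + ∫⁻ a, F a ∂(cconv x1 x2)
      = ∫⁻ a, F a ∂x1 + ∫⁻ a, F a ∂x2 := by
    have hm1 : Measurable fun p : EReal × EReal => F (p.1 + p.2) :=
      hFm.comp measurable_add_er
    have hm2 : Measurable fun p : EReal × EReal => F p.1 := hFm.comp measurable_fst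
    rw [hv, hc, ← lintegral_add_left hm1 _, hcong, lintegral_add_left hm2 _, hfst, hsnd]
  -- finiteness
  have hf1 : ∫⁻ a, F a ∂x1 ≠ ⊤ := lint_fin x1 h1
  have hf2 : ∫⁻ a, F a ∂x2 ≠ ⊤ := lint_fin x2 h2
  have hsum_ne : ∫⁻ a, F a ∂x1 + ∫⁻ a, F a ∂x2 ≠ ⊤ := ENNReal.add_ne_top.mpr ⟨hf1, hf2⟩
  have hvc_ne : ∫⁻ a, F a ∂(vconv x1 x2) + ∫⁻ a, F a ∂(cconv x1 x2) ≠ ⊤ := by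
    rw [hmain]; exact hsum_ne
  have hv_ne : ∫⁻ a, F a ∂(vconv x1 x2) ≠ ⊤ :=
    fun ht => hvc_ne (by simp [ht])
  have hc_ne : ∫⁻ a, F a ∂(cconv x1 x2) ≠ ⊤ :=
    fun ht => hvc_ne (by simp [ht])
  rw [Hent_eq, Hent_eq, Hent_eq, Hent_eq, ← ENNReal.toReal_add hv_ne hc_ne,
    ← ENNReal.toReal_add hf1 hf2]
  exact congrArg ENNReal.toReal hmain
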